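/- arXiv:2103.06085 — 2 statements merged into one kernel-verified Lean document; each statement's English description precedes it below -/
import Mathlib

section
/- For a nonempty closed convex set O ⊆ ℝ² and a point x̄, the signed distance from x̄ to O equals the supremum over unit vectors ẑ of the signed distance from x̄ to the supporting hyperplane in direction ẑ: sd(x̄, O) = sup_{‖ẑ‖=1} (⟨ẑ, x̄⟩ − h_O(ẑ)). -/
open scoped RealInnerProductSpace
open Classical

noncomputable def suppFunE (S : Set (EuclideanSpace ℝ (Fin 2)))
    (z : EuclideanSpace ℝ (Fin 2)) : EReal :=
  ⨆ y : S, ((⟪z, (y : EuclideanSpace ℝ (Fin 2))⟫ : ℝ) : EReal)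

/-- Penetration depth of a point: infimum of `‖z‖` over translations `z` with `x̄ + z ∉ O`
(`+∞` if no such translation exists). -/
noncomputable def penPointE (xbar : EuclideanSpace ℝ (Fin 2))
    (O : Set (EuclideanSpace ℝ (Fin 2))) : EReal :=
  sInf {r : EReal | ∃ z : EuclideanSpace ℝ (Fin 2), r = (‖z‖ : EReal) ∧ xbar + z ∉ O}

/-- Signed distance of a point to a set. -/
noncomputable def sdPointE (xbar : EuclideanSpace ℝ (Fin 2))
    (O : Set (EuclideanSpace ℝ (Fin 2))) : EReal :=
  if xbar ∈ O then -penPointE xbar O else ((Metric.infDist xbar O : ℝ) : EReal)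

/-!
Outside `O`, the supremum is attained at the unit normal through the nearest point of `O`,
and no direction does better since `⟪z, x - y⟫ ≤ ‖x - y‖`. Inside `O`, walking from `x` along `z`
for longer than `h_O(z) - ⟪z, x⟫` leaves `O`, so every term is at most `-pen(x, O)`; conversely,
every exit point `x + v ∉ O` has a separating unit normal whose term at `x` is at least `-‖v‖`.
-/

section InnerProductSpace

variable {E : Type*} [NormedAddCommGroup E] [InnerProductSpace ℝ E]

/-- The witness is the unit normal through the nearest point of `O`. -/
theorem exists_norm_eq_one_forall_infDist_le_inner_sub {O : Set E} (hne : O.Nonempty)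
    (hcompl : IsComplete O) (hconv : Convex ℝ O) {w : E} (hw : w ∉ O) :
    ∃ z : E, ‖z‖ = 1 ∧ ∀ y ∈ O, Metric.infDist w O ≤ ⟪z, w - y⟫ := by
  obtain ⟨p, hp, hproj⟩ := exists_norm_eq_iInf_of_complete_convex hne hcompl hconv w
  have hobtuse : ∀ y ∈ O, ⟪w - p, y - p⟫ ≤ 0 :=
    (norm_eq_iInf_iff_real_inner_le_zero hconv hp).mp hproj
  have hdist : Metric.infDist w O = ‖w - p‖ := by
    simpa only [Metric.infDist_eq_iInf, dist_eq_norm] using hproj.symm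
  have hpos : 0 < ‖w - p‖ := norm_pos_iff.mpr (sub_ne_zero.mpr fun h => hw (h ▸ hp))
  refine ⟨‖w - p‖⁻¹ • (w - p), by simp [norm_smul, hpos.ne'], fun y hy => ?_⟩
  have hsplit : ⟪w - p, w - y⟫ = ‖w - p‖ ^ 2 - ⟪w - p, y - p⟫ := by
    rw [← real_inner_self_eq_norm_sq, ← inner_sub_right]
    congr 1
    abel
  rw [hdist, real_inner_smul_left, hsplit, le_inv_mul_iff₀ hpos]
  nlinarith [hobtuse y hy]

theorem inner_sub_le_infDist {O : Set E} (hne : O.Nonempty) {z x : E} (hz : ‖z‖ ≤ 1) {s : ℝ}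
    (hs : ∀ y ∈ O, ⟪z, y⟫ ≤ s) : ⟪z, x⟫ - s ≤ Metric.infDist x O := by
  refine (Metric.le_infDist hne).2 fun y hy => ?_
  calc ⟪z, x⟫ - s ≤ ⟪z, x - y⟫ := by rw [inner_sub_right]; linarith [hs y hy]
    _ ≤ ‖z‖ * ‖x - y‖ := real_inner_le_norm z _
    _ ≤ dist x y := by rw [dist_eq_norm]; nlinarith [norm_nonneg (x - y)]

end InnerProductSpace

section Plane

local notation "ℝ²" => EuclideanSpace ℝ (Fin 2)

theorem inner_le_suppFunE {O : Set ℝ²} {z y : ℝ²} (hy : y ∈ O) :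
    ((⟪z, y⟫ : ℝ) : EReal) ≤ suppFunE O z :=
  le_iSup (fun y : O => ((⟪z, (y : ℝ²)⟫ : ℝ) : EReal)) ⟨y, hy⟩

theorem le_coe_inner_sub_suppFunE {O : Set ℝ²} {z x : ℝ²} {c : ℝ}
    (h : ∀ y ∈ O, c ≤ ⟪z, x - y⟫) : (c : EReal) ≤ ((⟪z, x⟫ : ℝ) : EReal) - suppFunE O z := by
  have hsupp : suppFunE O z ≤ ((⟪z, x⟫ - c : ℝ) : EReal) :=
    iSup_le fun y => EReal.coe_le_coe_iff.2 <| by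
      linarith [h y y.2, inner_sub_right (𝕜 := ℝ) z x (y : ℝ²)]
  calc (c : EReal) = ((⟪z, x⟫ : ℝ) : EReal) - ((⟪z, x⟫ - c : ℝ) : EReal) := by
        rw [← EReal.coe_sub, sub_sub_cancel]
    _ ≤ ((⟪z, x⟫ : ℝ) : EReal) - suppFunE O z := EReal.sub_le_sub le_rfl hsupp

/-- An unbounded direction contributes `⊥`, so only real upper bounds `s` of `⟪z, ·⟫` on `O`
need to be checked. -/
theorem coe_inner_sub_suppFunE_le {O : Set ℝ²} (hne : O.Nonempty) {z x : ℝ²} {c : EReal}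
    (h : ∀ s : ℝ, (∀ y ∈ O, ⟪z, y⟫ ≤ s) → ((⟪z, x⟫ - s : ℝ) : EReal) ≤ c) :
    ((⟪z, x⟫ : ℝ) : EReal) - suppFunE O z ≤ c := by
  induction hS : suppFunE O z using EReal.rec with
  | bot =>
    obtain ⟨y, hy⟩ := hne
    exact absurd (hS ▸ inner_le_suppFunE hy) (not_le.2 (EReal.bot_lt_coe _))
  | top => simp
  | coe s =>
    rw [← EReal.coe_sub]
    exact h s fun y hy => EReal.coe_le_coe_iff.1 (hS ▸ inner_le_suppFunE hy)

theorem penPointE_le_sub_inner {O : Set ℝ²} {x z : ℝ²} (hx : x ∈ O) (hz : ‖z‖ = 1) {s : ℝ}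
    (hs : ∀ y ∈ O, ⟪z, y⟫ ≤ s) : penPointE x O ≤ ((s - ⟪z, x⟫ : ℝ) : EReal) := by
  refine EReal.le_of_forall_lt_iff_le.1 fun t ht => ?_
  have ht : s - ⟪z, x⟫ < t := EReal.coe_lt_coe_iff.1 ht
  have ht0 : 0 < t := by linarith [hs x hx]
  have hout : x + t • z ∉ O := fun hmem => by
    have := hs _ hmem
    rw [inner_add_right, real_inner_smul_right, real_inner_self_eq_norm_sq, hz] at this
    linarith
  refine sInf_le ⟨t • z, ?_, hout⟩
  rw [norm_smul, hz, mul_one, Real.norm_of_nonneg ht0.le]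

theorem neg_penPointE_le_iSup {O : Set ℝ²} (hne : O.Nonempty) (hcl : IsClosed O)
    (hconv : Convex ℝ O) (x : ℝ²) :
    -penPointE x O ≤ ⨆ z ∈ {z : ℝ² | ‖z‖ = 1}, (((⟪z, x⟫ : ℝ) : EReal) - suppFunE O z) := by
  rw [EReal.neg_le]
  refine le_sInf ?_
  rintro _ ⟨v, rfl, hv⟩
  rw [EReal.neg_le, ← EReal.coe_neg]
  obtain ⟨z, hz, hsep⟩ :=
    exists_norm_eq_one_forall_infDist_le_inner_sub hne hcl.isComplete hconv hv
  refine le_iSup₂_of_le (f := fun z _ => ((⟪z, x⟫ : ℝ) : EReal) - suppFunE O z) z hz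
    (le_coe_inner_sub_suppFunE fun y hy => ?_)
  have hvy : ⟪z, x - y⟫ = ⟪z, x + v - y⟫ - ⟪z, v⟫ := by
    rw [← inner_sub_right]
    congr 1
    abel
  have hv_le : ⟪z, v⟫ ≤ ‖v‖ := by simpa [hz] using real_inner_le_norm z v
  linarith [hsep y hy, Metric.infDist_nonneg (x := x + v) (s := O)]

end Plane

/-- for nonempty closed convex `O`,
`sd(x̄, O) = sup_{‖ẑ‖=1} (⟪ẑ, x̄⟫ − h_O(ẑ))`. -/
theorem sdPoint_eq_sup_over_unit_directions
    (O : Set (EuclideanSpace ℝ (Fin 2)))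
    (hne : O.Nonempty) (hcl : IsClosed O) (hconv : Convex ℝ O)
    (xbar : EuclideanSpace ℝ (Fin 2)) :
    sdPointE xbar O =
      ⨆ zhat ∈ {z : EuclideanSpace ℝ (Fin 2) | ‖z‖ = 1},
        (((⟪zhat, xbar⟫ : ℝ) : EReal) - suppFunE O zhat) := by
  by_cases hx : xbar ∈ O
  · rw [sdPointE, if_pos hx]
    refine le_antisymm (neg_penPointE_le_iSup hne hcl hconv xbar) (iSup₂_le fun z hz => ?_)
    refine coe_inner_sub_suppFunE_le hne fun s hs => ?_
    rw [EReal.le_neg, ← EReal.coe_neg, neg_sub]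
    exact penPointE_le_sub_inner hx hz hs
  · rw [sdPointE, if_neg hx]
    refine le_antisymm ?_ (iSup₂_le fun z hz => coe_inner_sub_suppFunE_le hne fun s hs =>
      EReal.coe_le_coe_iff.2 (inner_sub_le_infDist hne hz.le hs))
    obtain ⟨z, hz, hsep⟩ :=
      exists_norm_eq_one_forall_infDist_le_inner_sub hne hcl.isComplete hconv hx
    exact le_iSup₂_of_le (f := fun z _ => ((⟪z, xbar⟫ : ℝ) : EReal) - suppFunE O z) z hz
      (le_coe_inner_sub_suppFunE hsep)
end

section
/- If x̄ lies inside a nonempty closed convex set O ⊆ ℝ², then for every unit vector ẑ we have ⟨ẑ, x̄⟩ − sup_{y∈O} ⟨ẑ, y⟩ ≤ 0, and the supremum over unit ẑ of this expression equals minus the distance from x̄ to the boundary of O (the negated penetration depth). -/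
open scoped RealInnerProductSpace

/-! The closed ball of radius `d = infDist x̄ Oᶜ` about `x̄` lies in the closed set `O`, so for
a unit `ẑ` it contains `x̄ + d • ẑ` and `h_O(ẑ) ≥ ⟪ẑ, x̄⟫ + d`. Conversely, a point `w ∉ O` is
strictly separated from `O` (Hahn–Banach) by a hyperplane with unit normal `ẑ`, so
`h_O(ẑ) ≤ ⟪ẑ, w⟫` and `⟪ẑ, x̄⟫ - h_O(ẑ) ≥ -‖x̄ - w‖`. If `O` is the whole plane, both sides
are `⊥`. -/

open Metric Set

theorem EReal.le_coe_infDist {α : Type*} [PseudoMetricSpace α] {x : α} {s : Set α} {a : EReal}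
    (hs : s.Nonempty) (h : ∀ y ∈ s, a ≤ (dist x y : EReal)) : a ≤ (infDist x s : EReal) := by
  induction a using EReal.rec with
  | bot => exact bot_le
  | top =>
    obtain ⟨y, hy⟩ := hs
    exact absurd (h y hy) (by simp)
  | coe a => exact_mod_cast (le_infDist hs).2 fun y hy => by exact_mod_cast h y hy

section SupportFunction

variable {E : Type*} [NormedAddCommGroup E] [InnerProductSpace ℝ E] {S : Set E} {x y z w : E}

noncomputable def supportFunction (S : Set E) (z : E) : EReal :=
  ⨆ y : S, ((⟪z, y⟫ : ℝ) : EReal)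

theorem inner_le_supportFunction (hy : y ∈ S) :
    ((⟪z, y⟫ : ℝ) : EReal) ≤ supportFunction S z :=
  le_iSup (fun p : S => ((⟪z, (p : E)⟫ : ℝ) : EReal)) ⟨y, hy⟩

theorem supportFunction_univ (hz : z ≠ 0) : supportFunction univ z = ⊤ := by
  refine EReal.eq_top_iff_forall_lt _ |>.2 fun r => ?_
  have hinner : ⟪z, ((r + 1) / ‖z‖ ^ 2) • z⟫ = r + 1 := by
    rw [real_inner_smul_right, real_inner_self_eq_norm_sq]
    field_simp
  calc (r : EReal) < ((r + 1 : ℝ) : EReal) := by exact_mod_cast lt_add_one r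
    _ ≤ supportFunction univ z := hinner ▸ inner_le_supportFunction (mem_univ _)

theorem inner_add_infDist_compl_le_supportFunction (hS : IsClosed S) (hx : x ∈ S)
    (hz : ‖z‖ = 1) : ((⟪z, x⟫ + infDist x Sᶜ : ℝ) : EReal) ≤ supportFunction S z := by
  set d := infDist x Sᶜ
  have hmem : x + d • z ∈ S := by
    refine hS.closure_eq ▸ closedBall_infDist_compl_subset_closure hx ?_
    simp [norm_smul, hz, d, abs_of_nonneg infDist_nonneg]
  have hinner : ⟪z, x + d • z⟫ = ⟪z, x⟫ + d := by
    rw [inner_add_right, real_inner_smul_right, real_inner_self_eq_norm_sq, hz]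
    ring
  exact hinner ▸ inner_le_supportFunction hmem

theorem inner_sub_supportFunction_le_neg_infDist_compl (hS : IsClosed S) (hx : x ∈ S)
    (hz : ‖z‖ = 1) :
    ((⟪z, x⟫ : ℝ) : EReal) - supportFunction S z ≤ -(infDist x Sᶜ : EReal) :=
  calc ((⟪z, x⟫ : ℝ) : EReal) - supportFunction S z
      ≤ ((⟪z, x⟫ : ℝ) : EReal) - ((⟪z, x⟫ + infDist x Sᶜ : ℝ) : EReal) :=
        EReal.sub_le_sub le_rfl (inner_add_infDist_compl_le_supportFunction hS hx hz)
    _ = -(infDist x Sᶜ : EReal) := by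
        rw [← EReal.coe_sub, ← EReal.coe_neg]
        ring_nf

theorem iSup_inner_sub_supportFunction_univ :
    ⨆ z ∈ {z : E | ‖z‖ = 1}, ((⟪z, x⟫ : ℝ) : EReal) - supportFunction univ z = ⊥ := by
  refine le_bot_iff.1 <| iSup₂_le fun z hz => ?_
  rw [supportFunction_univ (norm_ne_zero_iff.1 (ne_of_eq_of_ne hz one_ne_zero)), EReal.sub_top]

variable [CompleteSpace E]

theorem exists_norm_eq_one_supportFunction_le_inner (hne : S.Nonempty) (hconv : Convex ℝ S)
    (hS : IsClosed S) (hw : w ∉ S) :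
    ∃ z, ‖z‖ = 1 ∧ supportFunction S z ≤ ((⟪z, w⟫ : ℝ) : EReal) := by
  obtain ⟨f, u, hfS, hfw⟩ := geometric_hahn_banach_closed_point hconv hS hw
  set v := (InnerProductSpace.toDual ℝ E).symm f
  have hv : ∀ y, ⟪v, y⟫ = f y := fun y => InnerProductSpace.toDual_symm_apply
  have hv0 : v ≠ 0 := by
    rintro h
    obtain ⟨y, hy⟩ := hne
    have := (hfS y hy).trans hfw
    simp [← hv, h] at this
  refine ⟨‖v‖⁻¹ • v, norm_smul_inv_norm hv0, iSup_le fun y => EReal.coe_le_coe_iff.2 ?_⟩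
  simp only [real_inner_smul_left, hv]
  exact mul_le_mul_of_nonneg_left ((hfS y y.2).trans hfw).le (by positivity)

theorem neg_infDist_compl_le_iSup_inner_sub_supportFunction (hne : S.Nonempty)
    (hconv : Convex ℝ S) (hS : IsClosed S) (hc : Sᶜ.Nonempty) :
    -(infDist x Sᶜ : EReal) ≤
      ⨆ z ∈ {z : E | ‖z‖ = 1}, ((⟪z, x⟫ : ℝ) : EReal) - supportFunction S z := by
  refine EReal.neg_le.1 <| EReal.le_coe_infDist hc fun w hw => EReal.neg_le.1 ?_
  obtain ⟨z, hz, hzw⟩ := exists_norm_eq_one_supportFunction_le_inner hne hconv hS hw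
  have hdist : -dist x w ≤ ⟪z, x⟫ - ⟪z, w⟫ := by
    have := real_inner_le_norm z (w - x)
    rw [hz, one_mul, ← dist_eq_norm, dist_comm, inner_sub_right] at this
    linarith
  calc -(dist x w : EReal) ≤ ((⟪z, x⟫ - ⟪z, w⟫ : ℝ) : EReal) := by exact_mod_cast hdist
    _ ≤ ((⟪z, x⟫ : ℝ) : EReal) - supportFunction S z := by
        rw [EReal.coe_sub]
        exact EReal.sub_le_sub le_rfl hzw
    _ ≤ _ := le_iSup₂_of_le (f := fun z (_ : z ∈ {z : E | ‖z‖ = 1}) =>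
          ((⟪z, x⟫ : ℝ) : EReal) - supportFunction S z) z hz le_rfl

theorem iSup_inner_sub_supportFunction_eq_neg_infDist_compl (hconv : Convex ℝ S)
    (hS : IsClosed S) (hx : x ∈ S) (hc : Sᶜ.Nonempty) :
    ⨆ z ∈ {z : E | ‖z‖ = 1}, ((⟪z, x⟫ : ℝ) : EReal) - supportFunction S z =
      -(infDist x Sᶜ : EReal) :=
  le_antisymm (iSup₂_le fun _ hz => inner_sub_supportFunction_le_neg_infDist_compl hS hx hz)
    (neg_infDist_compl_le_iSup_inner_sub_supportFunction ⟨x, hx⟩ hconv hS hc)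

end SupportFunction

theorem penPointE_eq_infDist {xbar : EuclideanSpace ℝ (Fin 2)}
    {O : Set (EuclideanSpace ℝ (Fin 2))} (hc : Oᶜ.Nonempty) :
    penPointE xbar O = (infDist xbar Oᶜ : EReal) := by
  refine le_antisymm (EReal.le_coe_infDist hc fun w hw => ?_) (le_sInf ?_)
  · refine sInf_le ⟨w - xbar, ?_, by simpa using hw⟩
    rw [dist_comm, dist_eq_norm]
  · rintro _ ⟨z, rfl, hz⟩
    have h : infDist xbar Oᶜ ≤ dist xbar (xbar + z) := infDist_le_dist_of_mem (s := Oᶜ) hz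
    rw [dist_comm, dist_eq_norm, add_sub_cancel_left] at h
    exact_mod_cast h

theorem penPointE_univ (xbar : EuclideanSpace ℝ (Fin 2)) : penPointE xbar univ = ⊤ := by
  simp [penPointE]

theorem sup_over_unit_directions_of_mem_general
    (O : Set (EuclideanSpace ℝ (Fin 2)))
    (hcl : IsClosed O) (hconv : Convex ℝ O)
    (xbar : EuclideanSpace ℝ (Fin 2)) (hx : xbar ∈ O) :
    (∀ zhat : EuclideanSpace ℝ (Fin 2), ‖zhat‖ = 1 →
        ((⟪zhat, xbar⟫ : ℝ) : EReal) - suppFunE O zhat ≤ 0) ∧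
      (⨆ zhat ∈ {z : EuclideanSpace ℝ (Fin 2) | ‖z‖ = 1},
          (((⟪zhat, xbar⟫ : ℝ) : EReal) - suppFunE O zhat)) = -penPointE xbar O := by
  refine ⟨fun _ _ => EReal.sub_nonpos.2 (inner_le_supportFunction hx), ?_⟩
  rcases Oᶜ.eq_empty_or_nonempty with hc | hc
  · obtain rfl : O = univ := compl_empty_iff.1 hc
    rw [penPointE_univ, EReal.neg_top]
    exact iSup_inner_sub_supportFunction_univ
  · rw [penPointE_eq_infDist hc]
    exact iSup_inner_sub_supportFunction_eq_neg_infDist_compl hconv hcl hx hc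

/-- if `x̄` lies inside a nonempty closed convex `O` with nonempty interior,
then for every unit `ẑ`, `⟪ẑ, x̄⟫ − h_O(ẑ) ≤ 0`, and the supremum of this expression over
unit directions equals the negated penetration depth. -/
theorem sup_over_unit_directions_of_mem
    (O : Set (EuclideanSpace ℝ (Fin 2)))
    (hne : O.Nonempty) (hcl : IsClosed O) (hconv : Convex ℝ O)
    (hint : (interior O).Nonempty)
    (xbar : EuclideanSpace ℝ (Fin 2)) (hx : xbar ∈ O) :
    (∀ zhat : EuclideanSpace ℝ (Fin 2), ‖zhat‖ = 1 →
        ((⟪zhat, xbar⟫ : ℝ) : EReal) - suppFunE O zhat ≤ 0) ∧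
      (⨆ zhat ∈ {z : EuclideanSpace ℝ (Fin 2) | ‖z‖ = 1},
          (((⟪zhat, xbar⟫ : ℝ) : EReal) - suppFunE O zhat)) = -penPointE xbar O :=
  sup_over_unit_directions_of_mem_general O hcl hconv xbar hx
end
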